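/- Let n ≥ 2, let V be a finite type, G a simple graph on V, v : Fin n × ZMod 3 → V an injective map, and z : Fin n → ZMod 3, where the column index is read cyclically (column n means column 0). Suppose that for every i ∈ Fin n and j ∈ ZMod 3 there is a path Q_{i,j} in G from v(i, j) to v(i+1 mod n, j + z(i)) containing at least one internal vertex, such that: no vertex v(i', j') occurs as an internal vertex of any Q_{i,j}; any two distinct paths Q_{i,j} and Q_{i',j'} have no common internal vertices; every vertex of V lies on some Q_{i,j}; and every edge of G lies on some Q_{i,j}. Then G has a Hamiltonian cycle if and only if Σ_{i ∈ Fin n} z(i) ≠ 0 in ZMod 3; moreover, when Σ_{i ∈ Fin n} z(i) = 0, G is a vertex-disjoint union of exactly three cycles. -/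

import Mathlib

/-- The internal vertices of a walk: its vertices other than the first and the last. -/
def SimpleGraph.Walk.interior {V : Type*} {G : SimpleGraph V} {u v : V}
    (p : G.Walk u v) : List V := p.support.tail.dropLast

/-!
Read `Q i j` as a path from the terminal `v (i, j)` to the terminal `v (σ (i, j))`, where
`σ (i, j) = (i + 1, j + z i)` is a skew rotation of `Fin n × ZMod 3`. Concatenating the paths
along a cycle of the permutation `σ` gives a cycle of `G`; paths over different cycles of `σ` meet
nowhere, and since every vertex and edge of `G` lies on one of the paths, vertices of `G` on paths
over different cycles of `σ` are not even connected. Hence `G` has a Hamiltonian cycle iff `σ` is a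
single cycle. Going once around the columns, `σ^[n] (0, j) = (0, j + ∑ i, z i)`: a nonzero sum
generates `ZMod 3`, so `σ` is one cycle of length `3 n`; a zero sum leaves the three cycles
through the points `(0, j)`.
-/

open Function Equiv

namespace SimpleGraph.Walk

variable {V : Type*} {G : SimpleGraph V} {u w x : V}

lemma support_tail_eq_interior_append {p : G.Walk u w} (hp : ¬p.Nil) :
    p.support.tail = p.interior ++ [w] := by
  have hne : p.support.tail ≠ [] := List.ne_nil_of_mem (end_mem_tail_support hp)
  conv_lhs => rw [← List.dropLast_append_getLast hne, List.getLast_tail, getLast_support]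
  rfl

lemma mem_support_tail_iff {p : G.Walk u w} (hp : ¬p.Nil) :
    x ∈ p.support.tail ↔ x ∈ p.interior ∨ x = w := by
  simp [support_tail_eq_interior_append hp]

lemma mem_support_iff_mem_interior {p : G.Walk u w} (hp : ¬p.Nil) :
    x ∈ p.support ↔ x = u ∨ x ∈ p.interior ∨ x = w := by
  rw [← cons_tail_support, List.mem_cons, mem_support_tail_iff hp]

lemma IsPath.mem_interior_of_mem_edges {p : G.Walk u w} (hp : p.IsPath) (hl : 2 ≤ p.length)
    {a b : V} (he : s(a, b) ∈ p.edges) : a ∈ p.interior ∨ b ∈ p.interior := by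
  have hnil : ¬p.Nil := by rw [← length_eq_zero_iff]; omega
  have hab := (p.adj_of_mem_edges he).ne
  have hend : s(u, w) ∉ p.edges := fun h => by
    have := hp.length_eq_one_of_mem_edges h; omega
  have ha := (mem_support_iff_mem_interior hnil).1 (p.fst_mem_support_of_mem_edges he)
  have hb := (mem_support_iff_mem_interior hnil).1 (p.snd_mem_support_of_mem_edges he)
  rcases ha with rfl | ha | rfl <;> rcases hb with rfl | hb | rfl <;>
    simp_all [Sym2.eq_swap]

lemma IsCycle.isHamiltonianCycle_of_forall_mem_support [DecidableEq V] {c : G.Walk u u}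
    (hc : c.IsCycle) (h : ∀ x, x ∈ c.support) : c.IsHamiltonianCycle := by
  refine ⟨hc, hc.isPath_tail.isHamiltonian_of_mem fun x => ?_⟩
  rw [support_tail_of_not_nil _ hc.not_nil]
  obtain rfl | hx := (mem_support_iff _).1 (h x)
  exacts [end_mem_tail_support hc.not_nil, hx]

end SimpleGraph.Walk

open SimpleGraph Walk

namespace Equiv.Perm

variable {ι : Type*} {σ : Perm ι} {p q : ι}

variable (σ) in
lemma sameCycle_iterate (k : ℕ) (p : ι) : σ.SameCycle p (σ^[k] p) :=
  ⟨k, by rw [zpow_natCast, iterate_eq_pow]⟩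

variable [Finite ι]

lemma sameCycle_iff_exists_iterate_eq : σ.SameCycle p q ↔ ∃ k : ℕ, σ^[k] p = q :=
  ⟨fun h => h.exists_nat_pow_eq.imp fun k hk => by rwa [iterate_eq_pow],
    fun ⟨k, hk⟩ => hk ▸ sameCycle_iterate σ k p⟩

variable (σ) in
lemma minimalPeriod_pos (p : ι) : 0 < minimalPeriod σ p :=
  minimalPeriod_pos_of_mem_periodicPts (σ.injective.mem_periodicPts p)

lemma sameCycle_iff_exists_lt_minimalPeriod :
    σ.SameCycle p q ↔ ∃ k < minimalPeriod σ p, σ^[k] p = q := by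
  refine sameCycle_iff_exists_iterate_eq.trans ⟨fun ⟨k, hk⟩ => ?_, fun ⟨k, _, hk⟩ => ⟨k, hk⟩⟩
  exact ⟨k % minimalPeriod σ p, Nat.mod_lt _ (σ.minimalPeriod_pos p),
    by rwa [iterate_mod_minimalPeriod_eq]⟩

end Equiv.Perm

namespace SimpleGraph

variable {ι V : Type*} {G : SimpleGraph V} {v : ι → V}

section iterate

variable {f : ι → ι} (Q : ∀ p, G.Walk (v p) (v (f p)))

def iterateWalk : ∀ (m : ℕ) (p : ι), G.Walk (v p) (v (f^[m] p))
  | 0, _ => nil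
  | m + 1, p => (Q p).append (iterateWalk m (f p))

lemma support_iterateWalk_succ (m : ℕ) (p : ι) :
    (iterateWalk Q (m + 1) p).support = (Q p).support ++ (iterateWalk Q m (f p)).support.tail :=
  support_append _ _

lemma edges_iterateWalk_succ (m : ℕ) (p : ι) :
    (iterateWalk Q (m + 1) p).edges = (Q p).edges ++ (iterateWalk Q m (f p)).edges :=
  edges_append _ _

lemma support_tail_iterateWalk (m : ℕ) (p : ι) :
    (iterateWalk Q m p).support.tail =
      ((List.range m).map (f^[·] p)).flatMap fun q => (Q q).support.tail := by
  induction m generalizing p with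
  | zero => rfl
  | succ m ih =>
    rw [support_iterateWalk_succ, List.tail_append_of_ne_nil (support_ne_nil _), ih,
      List.range_succ_eq_map]
    simp [Function.comp_def]

lemma edges_iterateWalk (m : ℕ) (p : ι) :
    (iterateWalk Q m p).edges = ((List.range m).map (f^[·] p)).flatMap fun q => (Q q).edges := by
  induction m generalizing p with
  | zero => rfl
  | succ m ih =>
    rw [edges_iterateWalk_succ, ih, List.range_succ_eq_map]
    simp [Function.comp_def]

lemma mem_support_iterateWalk_iff {m : ℕ} (hm : m ≠ 0) (p : ι) {x : V} :
    x ∈ (iterateWalk Q m p).support ↔ ∃ k < m, x ∈ (Q (f^[k] p)).support := by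
  obtain ⟨m, rfl⟩ := Nat.exists_eq_succ_of_ne_zero hm
  clear hm
  induction m generalizing p with
  | zero => simp +contextual [iterateWalk]
  | succ m ih =>
    have h : x ∈ (iterateWalk Q (m + 2) p).support ↔
        x ∈ (Q p).support ∨ x ∈ (iterateWalk Q (m + 1) (f p)).support :=
      mem_support_append_iff _ _
    rw [h, ih, Nat.exists_lt_succ_left (n := m + 1)]
    rfl

end iterate

section orbit

variable {σ : Perm ι} (Q : ∀ p, G.Walk (v p) (v (σ p)))

noncomputable def orbitWalk (p : ι) : G.Walk (v p) (v p) :=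
  (iterateWalk Q (minimalPeriod σ p) p).copy rfl (congrArg v iterate_minimalPeriod)

lemma nodup_orbitList (σ : Perm ι) (p : ι) :
    ((List.range (minimalPeriod σ p)).map (σ^[·] p)).Nodup :=
  List.nodup_range.map_on fun _ ha _ hb h =>
    iterate_injOn_Iio_minimalPeriod (by simpa using ha) (by simpa using hb) h

variable [Finite ι]

lemma mem_support_orbitWalk_iff {p : ι} {x : V} :
    x ∈ (orbitWalk Q p).support ↔ ∃ q, σ.SameCycle p q ∧ x ∈ (Q q).support := by
  rw [orbitWalk, support_copy, mem_support_iterateWalk_iff Q ((σ.minimalPeriod_pos p).ne')]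
  simp [Perm.sameCycle_iff_exists_lt_minimalPeriod]

lemma mem_edges_orbitWalk_iff {p : ι} {e : Sym2 V} :
    e ∈ (orbitWalk Q p).edges ↔ ∃ q, σ.SameCycle p q ∧ e ∈ (Q q).edges := by
  rw [orbitWalk, edges_copy, edges_iterateWalk]
  simp [Perm.sameCycle_iff_exists_lt_minimalPeriod]

end orbit

structure IsLinkage (v : ι → V) (σ : Perm ι) (Q : ∀ p, G.Walk (v p) (v (σ p))) : Prop where
  injective : Injective v
  isPath (p : ι) : (Q p).IsPath
  two_le_length (p : ι) : 2 ≤ (Q p).length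
  terminal_notMem_interior (p q : ι) : v q ∉ (Q p).interior
  disjoint_interior {p q : ι} : p ≠ q → ∀ x ∈ (Q p).interior, x ∉ (Q q).interior

namespace IsLinkage

variable {σ : Perm ι} {Q : ∀ p, G.Walk (v p) (v (σ p))} (hQ : IsLinkage v σ Q)
include hQ

lemma not_nil (p : ι) : ¬(Q p).Nil := by
  rw [← length_eq_zero_iff]; have := hQ.two_le_length p; omega

lemma eq_of_mem_interior_of_mem_support {p q : ι} {x : V} (hp : x ∈ (Q p).interior)
    (hq : x ∈ (Q q).support) : p = q := by
  by_contra hpq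
  rcases (mem_support_iff_mem_interior (hQ.not_nil q)).1 hq with rfl | hq | rfl
  · exact hQ.terminal_notMem_interior p q hp
  · exact hQ.disjoint_interior hpq x hp hq
  · exact hQ.terminal_notMem_interior p (σ q) hp

lemma disjoint_support_tail {p q : ι} (hpq : p ≠ q) :
    (Q p).support.tail.Disjoint (Q q).support.tail := by
  intro x hp hq
  rcases (mem_support_tail_iff (hQ.not_nil p)).1 hp with hp | rfl
  · exact hpq (hQ.eq_of_mem_interior_of_mem_support hp (List.mem_of_mem_tail hq))
  rcases (mem_support_tail_iff (hQ.not_nil q)).1 hq with hq | hq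
  · exact hQ.terminal_notMem_interior q (σ p) hq
  · exact hpq (σ.injective (hQ.injective hq))

lemma disjoint_edges {p q : ι} (hpq : p ≠ q) : (Q p).edges.Disjoint (Q q).edges := by
  intro e hp hq
  induction e using Sym2.ind with
  | _ a b =>
    rcases (hQ.isPath p).mem_interior_of_mem_edges (hQ.two_le_length p) hp with ha | hb
    · exact hpq (hQ.eq_of_mem_interior_of_mem_support ha ((Q q).fst_mem_support_of_mem_edges hq))
    · exact hpq (hQ.eq_of_mem_interior_of_mem_support hb ((Q q).snd_mem_support_of_mem_edges hq))

lemma mem_interior_or_exists_sameCycle {p : ι} {x : V} (hx : x ∈ (Q p).support) :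
    x ∈ (Q p).interior ∨ ∃ p', σ.SameCycle p p' ∧ v p' = x := by
  rcases (mem_support_iff_mem_interior (hQ.not_nil p)).1 hx with rfl | hx | rfl
  · exact .inr ⟨p, .rfl, rfl⟩
  · exact .inl hx
  · exact .inr ⟨σ p, Perm.SameCycle.rfl.apply_right, rfl⟩

lemma sameCycle_of_mem_support {p q : ι} {x : V} (hp : x ∈ (Q p).support)
    (hq : x ∈ (Q q).support) : σ.SameCycle p q := by
  rcases hQ.mem_interior_or_exists_sameCycle hp with hp | ⟨p', hpp', rfl⟩
  · exact (hQ.eq_of_mem_interior_of_mem_support hp hq).sameCycle σ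
  rcases hQ.mem_interior_or_exists_sameCycle hq with hq' | ⟨q', hqq', hq'⟩
  · exact (hQ.eq_of_mem_interior_of_mem_support hq' hp).symm.sameCycle σ
  · exact hpp'.trans ((hQ.injective hq').symm ▸ hqq'.symm)

lemma sameCycle_of_adj (hedge : ∀ e ∈ G.edgeSet, ∃ p, e ∈ (Q p).edges) {x y : V} {p q : ι}
    (hxy : G.Adj x y) (hx : x ∈ (Q p).support) (hy : y ∈ (Q q).support) : σ.SameCycle p q := by
  obtain ⟨r, hr⟩ := hedge s(x, y) hxy
  exact (hQ.sameCycle_of_mem_support hx ((Q r).fst_mem_support_of_mem_edges hr)).trans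
    (hQ.sameCycle_of_mem_support ((Q r).snd_mem_support_of_mem_edges hr) hy)

lemma sameCycle_of_reachable (hvert : ∀ x, ∃ p, x ∈ (Q p).support)
    (hedge : ∀ e ∈ G.edgeSet, ∃ p, e ∈ (Q p).edges) {x y : V} {p q : ι}
    (hxy : G.Reachable x y) (hx : x ∈ (Q p).support) (hy : y ∈ (Q q).support) :
    σ.SameCycle p q := by
  obtain ⟨w⟩ := hxy
  induction w generalizing p with
  | nil => exact hQ.sameCycle_of_mem_support hx hy
  | cons hadj w ih =>
    obtain ⟨r, hr⟩ := hvert _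
    exact (hQ.sameCycle_of_adj hedge hadj hx hr).trans (ih hr hy)

variable [Finite ι]

lemma isCycle_orbitWalk (p : ι) : (orbitWalk Q p).IsCycle := by
  obtain ⟨e, he⟩ := List.exists_mem_of_ne_nil _ (edges_eq_nil.not.2 (hQ.not_nil p))
  have hne : orbitWalk Q p ≠ nil := fun h => by
    simpa [h] using (mem_edges_orbitWalk_iff Q).2 ⟨p, .rfl, he⟩
  have hL := nodup_orbitList σ p
  refine (isCycle_def _).2 ⟨(isTrail_def _).2 ?_, hne, ?_⟩
  · rw [orbitWalk, edges_copy, edges_iterateWalk]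
    exact List.nodup_flatMap.2 ⟨fun q _ => (hQ.isPath q).edges_nodup,
      hL.imp fun hpq => hQ.disjoint_edges hpq⟩
  · rw [orbitWalk, support_copy, support_tail_iterateWalk]
    exact List.nodup_flatMap.2 ⟨fun q _ => (hQ.isPath q).support_nodup.tail,
      hL.imp fun hpq => hQ.disjoint_support_tail hpq⟩

lemma notMem_support_orbitWalk {p q : ι} (h : ¬σ.SameCycle p q) {x : V}
    (hp : x ∈ (orbitWalk Q p).support) : x ∉ (orbitWalk Q q).support := fun hq => by
  obtain ⟨p', hpp', hp'⟩ := (mem_support_orbitWalk_iff Q).1 hp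
  obtain ⟨q', hqq', hq'⟩ := (mem_support_orbitWalk_iff Q).1 hq
  exact h (hpp'.trans ((hQ.sameCycle_of_mem_support hp' hq').trans hqq'.symm))

lemma exists_isHamiltonianCycle_iff [DecidableEq V] [Nonempty ι]
    (hvert : ∀ x, ∃ p, x ∈ (Q p).support) (hedge : ∀ e ∈ G.edgeSet, ∃ p, e ∈ (Q p).edges) :
    (∃ (a : V) (c : G.Walk a a), c.IsHamiltonianCycle) ↔ ∀ p q, σ.SameCycle p q := by
  constructor
  · rintro ⟨a, c, hc⟩ p q
    have hreach (x : V) : G.Reachable a x := (c.takeUntil x (hc.mem_support x)).reachable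
    exact hQ.sameCycle_of_reachable hvert hedge ((hreach _).symm.trans (hreach _))
      (Q p).start_mem_support (Q q).start_mem_support
  · intro h
    obtain ⟨p⟩ := ‹Nonempty ι›
    refine ⟨v p, orbitWalk Q p,
      (hQ.isCycle_orbitWalk p).isHamiltonianCycle_of_forall_mem_support fun x => ?_⟩
    obtain ⟨q, hq⟩ := hvert x
    exact (mem_support_orbitWalk_iff Q).2 ⟨q, h p q, hq⟩

end IsLinkage

end SimpleGraph

section skewRotation

variable {n : ℕ} [NeZero n] {A : Type*} [AddCommGroup A] {z : Fin n → A}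

def skewRotation (z : Fin n → A) : Perm (Fin n × A) where
  toFun q := (q.1 + 1, q.2 + z q.1)
  invFun q := (q.1 - 1, q.2 - z (q.1 - 1))
  left_inv q := by simp
  right_inv q := by simp

open Fin.NatCast

lemma iterate_skewRotation_zero (k : ℕ) (a : A) :
    (skewRotation z)^[k] (0, a) = ((k : Fin n), a + ∑ l ∈ Finset.range k, z l) := by
  induction k with
  | zero => simp
  | succ k ih =>
    rw [iterate_succ_apply', ih]
    simp [skewRotation, Finset.sum_range_succ, add_assoc]

lemma iterate_skewRotation_mul (t : ℕ) (a : A) :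
    (skewRotation z)^[n * t] (0, a) = (0, a + t • ∑ i, z i) := by
  induction t generalizing a with
  | zero => simp
  | succ t ih =>
    rw [Nat.mul_succ, iterate_add_apply, iterate_skewRotation_zero, Fin.natCast_self,
      ← Fin.sum_univ_eq_sum_range (fun l => z l), ih]
    simp [succ_nsmul, add_assoc, add_comm]

lemma exists_sameCycle_skewRotation_zero (q : Fin n × A) :
    ∃ a, (skewRotation z).SameCycle (0, a) q := by
  refine ⟨q.2 - ∑ l ∈ Finset.range q.1.val, z l, ?_⟩
  simpa [iterate_skewRotation_zero] using
    Perm.sameCycle_iterate (skewRotation z) q.1.val (0, q.2 - ∑ l ∈ Finset.range q.1.val, z l)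

lemma sameCycle_skewRotation_zero_iff [Finite A] {a b : A} :
    (skewRotation z).SameCycle (0, a) (0, b) ↔ ∃ t : ℕ, b = a + t • ∑ i, z i := by
  constructor
  · intro h
    obtain ⟨k, hk⟩ := Perm.sameCycle_iff_exists_iterate_eq.1 h
    obtain ⟨t, rfl⟩ : n ∣ k := by
      rw [iterate_skewRotation_zero, Prod.ext_iff] at hk
      exact Fin.natCast_eq_zero.1 hk.1
    rw [iterate_skewRotation_mul, Prod.ext_iff] at hk
    exact ⟨t, hk.2.symm⟩
  · rintro ⟨t, rfl⟩
    simpa [iterate_skewRotation_mul] using Perm.sameCycle_iterate (skewRotation z) (n * t) (0, a)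

lemma forall_sameCycle_skewRotation_iff {p : ℕ} [Fact p.Prime] {z : Fin n → ZMod p} :
    (∀ q q', (skewRotation z).SameCycle q q') ↔ ∑ i, z i ≠ 0 := by
  refine ⟨fun h hz => ?_, fun hz q q' => ?_⟩
  · obtain ⟨t, ht⟩ := sameCycle_skewRotation_zero_iff.1 (h (0, 0) (0, 1))
    simp [hz] at ht
  · obtain ⟨a, ha⟩ := exists_sameCycle_skewRotation_zero (z := z) q
    obtain ⟨b, hb⟩ := exists_sameCycle_skewRotation_zero (z := z) q'
    have hab : (skewRotation z).SameCycle (0, a) (0, b) :=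
      sameCycle_skewRotation_zero_iff.2 ⟨((b - a) / ∑ i, z i).val, by
        rw [nsmul_eq_mul, ZMod.natCast_zmod_val, div_mul_cancel₀ _ hz, add_sub_cancel]⟩
    exact ha.symm.trans (hab.trans hb)

end skewRotation

theorem cyclic_gadget_hamiltonian_iff_general
    {n : ℕ} [NeZero n] {V : Type*} [DecidableEq V]
    (G : SimpleGraph V)
    (v : Fin n × ZMod 3 → V) (hv : Function.Injective v)
    (z : Fin n → ZMod 3)
    -- the column index is read cyclically: `i + 1` is addition in `Fin n`
    (Q : ∀ (i : Fin n) (j : ZMod 3), G.Walk (v (i, j)) (v (i + 1, j + z i)))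
    -- each `Q i j` is a path containing at least one internal vertex
    (hpath : ∀ i j, (Q i j).IsPath)
    (hlen : ∀ i j, 2 ≤ (Q i j).length)
    -- no `v (i', j')` is an internal vertex of any path
    (hterm : ∀ (i : Fin n) (j : ZMod 3) (p : Fin n × ZMod 3), v p ∉ (Q i j).interior)
    -- distinct paths share no internal vertices
    (hdisj : ∀ (i : Fin n) (j : ZMod 3) (i' : Fin n) (j' : ZMod 3), (i, j) ≠ (i', j') →
      ∀ x : V, x ∈ (Q i j).interior → x ∉ (Q i' j').interior)
    -- every vertex lies on some path
    (hvert : ∀ x : V, ∃ i j, x ∈ (Q i j).support)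
    -- every edge lies on some path
    (hedge : ∀ e ∈ G.edgeSet, ∃ i j, e ∈ (Q i j).edges) :
    ((∃ (a : V) (c : G.Walk a a), c.IsHamiltonianCycle) ↔ (∑ i, z i) ≠ 0) ∧
    ((∑ i, z i) = 0 →
      ∃ (a : ZMod 3 → V) (C : ∀ j : ZMod 3, G.Walk (a j) (a j)),
        (∀ j, (C j).IsCycle) ∧
        (∀ j j' : ZMod 3, j ≠ j' → ∀ x : V, x ∈ (C j).support → x ∉ (C j').support) ∧
        (∀ x : V, ∃ j, x ∈ (C j).support) ∧
        (∀ e ∈ G.edgeSet, ∃ j, e ∈ (C j).edges)) := by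
  let Q' (q : Fin n × ZMod 3) : G.Walk (v q) (v (skewRotation z q)) := Q q.1 q.2
  have hQ : IsLinkage v (skewRotation z) Q' :=
    ⟨hv, fun q => hpath q.1 q.2, fun q => hlen q.1 q.2, fun q => hterm q.1 q.2,
      fun hqq' => hdisj _ _ _ _ hqq'⟩
  have hvert' (x : V) : ∃ q, x ∈ (Q' q).support := Prod.exists.2 (hvert x)
  have hedge' (e) (he : e ∈ G.edgeSet) : ∃ q, e ∈ (Q' q).edges := Prod.exists.2 (hedge e he)
  refine ⟨(hQ.exists_isHamiltonianCycle_iff hvert' hedge').trans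
    forall_sameCycle_skewRotation_iff, fun hz => ?_⟩
  have hcycles (a b : ZMod 3) : (skewRotation z).SameCycle (0, a) (0, b) ↔ a = b := by
    simp [sameCycle_skewRotation_zero_iff, hz, eq_comm]
  refine ⟨fun j => v (0, j), fun j => orbitWalk Q' (0, j), fun j => hQ.isCycle_orbitWalk _,
    fun j j' hjj' x => hQ.notMem_support_orbitWalk (mt (hcycles j j').1 hjj'), fun x => ?_,
    fun e he => ?_⟩
  · obtain ⟨q, hq⟩ := hvert' x
    obtain ⟨a, ha⟩ := exists_sameCycle_skewRotation_zero (z := z) q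
    exact ⟨a, (mem_support_orbitWalk_iff Q').2 ⟨q, ha, hq⟩⟩
  · obtain ⟨q, hq⟩ := hedge' e he
    obtain ⟨a, ha⟩ := exists_sameCycle_skewRotation_zero (z := z) q
    exact ⟨a, (mem_edges_orbitWalk_iff Q').2 ⟨q, ha, hq⟩⟩

theorem cyclic_gadget_hamiltonian_iff
    {n : ℕ} [NeZero n] (hn : 2 ≤ n) {V : Type*} [Fintype V] [DecidableEq V]
    (G : SimpleGraph V)
    (v : Fin n × ZMod 3 → V) (hv : Function.Injective v)
    (z : Fin n → ZMod 3)
    -- the column index is read cyclically: `i + 1` is addition in `Fin n`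
    (Q : ∀ (i : Fin n) (j : ZMod 3), G.Walk (v (i, j)) (v (i + 1, j + z i)))
    -- each `Q i j` is a path containing at least one internal vertex
    (hpath : ∀ i j, (Q i j).IsPath)
    (hlen : ∀ i j, 2 ≤ (Q i j).length)
    -- no `v (i', j')` is an internal vertex of any path
    (hterm : ∀ (i : Fin n) (j : ZMod 3) (p : Fin n × ZMod 3), v p ∉ (Q i j).interior)
    -- distinct paths share no internal vertices
    (hdisj : ∀ (i : Fin n) (j : ZMod 3) (i' : Fin n) (j' : ZMod 3), (i, j) ≠ (i', j') →
      ∀ x : V, x ∈ (Q i j).interior → x ∉ (Q i' j').interior)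
    -- every vertex lies on some path
    (hvert : ∀ x : V, ∃ i j, x ∈ (Q i j).support)
    -- every edge lies on some path
    (hedge : ∀ e ∈ G.edgeSet, ∃ i j, e ∈ (Q i j).edges) :
    ((∃ (a : V) (c : G.Walk a a), c.IsHamiltonianCycle) ↔ (∑ i, z i) ≠ 0) ∧
    ((∑ i, z i) = 0 →
      ∃ (a : ZMod 3 → V) (C : ∀ j : ZMod 3, G.Walk (a j) (a j)),
        (∀ j, (C j).IsCycle) ∧
        (∀ j j' : ZMod 3, j ≠ j' → ∀ x : V, x ∈ (C j).support → x ∉ (C j').support) ∧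
        (∀ x : V, ∃ j, x ∈ (C j).support) ∧
        (∀ e ∈ G.edgeSet, ∃ j, e ∈ (C j).edges)) :=
  cyclic_gadget_hamiltonian_iff_general G v hv z Q hpath hlen hterm hdisj hvert hedge
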